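/- arXiv:0903.1381 — 2 statements merged into one kernel-verified Lean document; each statement's English description precedes it below -/
import Mathlib

section
/- Let (Γ, Γ') be a pair of quantized dual graded graphs on a common vertex set V with height function h, unique vertex v₀ of height 0, and edge-multiplicity functions m, m' : V × V → ℕ[q], with differential coefficient r ∈ ℤ[q] (i.e. D_{Γ'}∘U_Γ − q·U_Γ∘D_{Γ'} = r·Id on the free ℤ[q]-module ℤ[q]V). Then for every n ≥ 0, the sum over all vertices v of height n of f^v_Γ · f^v_{Γ'} equals rⁿ · [n]! in ℤ[q], where [n]! = [1][2]⋯[n] with [k] = 1 + q + ⋯ + q^{k−1}. -/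
open Polynomial

/-- The `q`-integer `[k] = 1 + q + ⋯ + q^{k−1}` in `ℤ[q]`. -/
noncomputable def qInt (k : ℕ) : Polynomial ℤ := ∑ i ∈ Finset.range k, Polynomial.X ^ i

/-- The `q`-factorial `[n]! = [1][2]⋯[n]` in `ℤ[q]`. -/
noncomputable def qFactorial (n : ℕ) : Polynomial ℤ :=
  ∏ k ∈ Finset.range n, qInt (k + 1)

/-!
Regard `f` as a vector; above height `0` it is fixed by `U_Γ`. Applying the commutation relation
`D_{Γ'} U_Γ = q U_Γ D_{Γ'} + r` to it and inducting on the height shows that `D_{Γ'} f = r [n+1] f`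
on height `n`. Since `U_{Γ'}` and `D_{Γ'}` are adjoint for the pairing of consecutive levels,
`Σ_{h v = n+1} f^v f'^v = Σ_{h v = n} f'^v (D_{Γ'} f)(v) = r [n+1] Σ_{h v = n} f^v f'^v`.
-/

theorem qInt_succ (k : ℕ) : qInt (k + 1) = 1 + X * qInt k := by
  rw [qInt, Finset.sum_range_succ', qInt, Finset.mul_sum]
  simp [pow_succ, mul_comm, add_comm]

def IsGraded {V R : Type*} [Zero R] (h : V → ℕ) (m : V → V → R) : Prop :=
  ∀ v u, m v u ≠ 0 → h u = h v + 1

theorem IsGraded.eq_zero_of_height_eq_zero {V R : Type*} [Zero R] {h : V → ℕ} {m : V → V → R}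
    (hm : IsGraded h m) {v : V} (hv : h v = 0) (t : V) : m t v = 0 :=
  by_contra fun hne => by have := hm t v hne; omega

section Levels

variable {V R : Type*} {h : V → ℕ} (hfib : ∀ n : ℕ, {v : V | h v = n}.Finite)

theorem mem_level_toFinset {k : ℕ} {v : V} : v ∈ (hfib k).toFinset ↔ h v = k :=
  (hfib k).mem_toFinset

theorem finsum_eq_sum_level {M : Type*} [AddCommMonoid M] {F : V → M} {k : ℕ}
    (hF : ∀ v, F v ≠ 0 → h v = k) : ∑ᶠ v, F v = ∑ v ∈ (hfib k).toFinset, F v :=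
  finsum_eq_finsetSum_of_support_subset F fun v hv => (mem_level_toFinset hfib).2 (hF v hv)

theorem sum_level_succ_mul_finsum [CommSemiring R] {m : V → V → R} (hm : IsGraded h m)
    (g φ : V → R) (n : ℕ) :
    ∑ u ∈ (hfib (n + 1)).toFinset, g u * ∑ᶠ v, m v u * φ v =
      ∑ v ∈ (hfib n).toFinset, φ v * ∑ᶠ u, m v u * g u := by
  calc _ = ∑ u ∈ (hfib (n + 1)).toFinset, ∑ v ∈ (hfib n).toFinset, g u * (m v u * φ v) := by
        refine Finset.sum_congr rfl fun u hu => ?_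
        rw [finsum_eq_sum_level hfib fun v hv => ?_, Finset.mul_sum]
        have := hm v u (left_ne_zero_of_mul hv)
        have := (mem_level_toFinset hfib).1 hu
        omega
    _ = ∑ v ∈ (hfib n).toFinset, ∑ u ∈ (hfib (n + 1)).toFinset, φ v * (m v u * g u) := by
        rw [Finset.sum_comm]
        exact Finset.sum_congr rfl fun _ _ => Finset.sum_congr rfl fun _ _ => by ring
    _ = _ := by
        refine Finset.sum_congr rfl fun v hv => ?_
        rw [finsum_eq_sum_level hfib fun u hu => ?_, Finset.mul_sum]
        rw [hm v u (left_ne_zero_of_mul hu), (mem_level_toFinset hfib).1 hv]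

theorem sum_level_mul_finsum_eq_finsum [CommSemiring R] {m m' : V → V → R} (hm : IsGraded h m)
    (hm' : IsGraded h m') (f : V → R) {v : V} {k : ℕ} (hv : h v = k) :
    ∑ w ∈ (hfib k).toFinset, f w * ∑ᶠ t, m' t w * m t v =
      ∑ᶠ t, m t v * ∑ᶠ w, m' t w * f w := by
  cases k with
  | zero => simp [hm.eq_zero_of_height_eq_zero hv]
  | succ j =>
    rw [sum_level_succ_mul_finsum hfib hm', finsum_eq_sum_level hfib fun t ht => ?_]
    have := hm t v (left_ne_zero_of_mul ht)
    omega

end Levels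

theorem finsum_mul_eq_of_commutation {V R : Type*} [DecidableEq V] [CommRing R] {h : V → ℕ}
    (hfib : ∀ n : ℕ, {v : V | h v = n}.Finite) {m m' : V → V → R}
    (hm : IsGraded h m) (hm' : IsGraded h m') {q r : R}
    (hdual : ∀ u v : V, h u = h v →
      (∑ᶠ w : V, m v w * m' u w) - q * (∑ᶠ w : V, m' w v * m w u) = if u = v then r else 0)
    {f : V → R} (hf : ∀ u : V, 1 ≤ h u → f u = ∑ᶠ v : V, m v u * f v) (v : V) :
    ∑ᶠ u, m' v u * f u = r * f v + q * ∑ᶠ t, m t v * ∑ᶠ w, m' t w * f w := by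
  have hv : v ∈ (hfib (h v)).toFinset := (mem_level_toFinset hfib).2 rfl
  calc ∑ᶠ u, m' v u * f u
      = ∑ u ∈ (hfib (h v + 1)).toFinset, m' v u * ∑ᶠ w, m w u * f w := by
        rw [finsum_eq_sum_level hfib fun u hu => hm' v u (left_ne_zero_of_mul hu)]
        refine Finset.sum_congr rfl fun u hu => ?_
        rw [← hf u (by rw [(mem_level_toFinset hfib).1 hu]; omega)]
    _ = ∑ w ∈ (hfib (h v)).toFinset,
          f w * ((if v = w then r else 0) + q * ∑ᶠ t, m' t w * m t v) := by
        rw [sum_level_succ_mul_finsum hfib hm]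
        refine Finset.sum_congr rfl fun w hw => ?_
        rw [← hdual v w ((mem_level_toFinset hfib).1 hw).symm, sub_add_cancel]
    _ = r * f v + q * ∑ w ∈ (hfib (h v)).toFinset, f w * ∑ᶠ t, m' t w * m t v := by
        simp only [mul_add, Finset.sum_add_distrib, mul_ite, mul_zero, Finset.sum_ite_eq,
          if_pos hv, Finset.mul_sum, mul_left_comm (f _) q, mul_comm (f v) r]
    _ = _ := by rw [sum_level_mul_finsum_eq_finsum hfib hm hm' f rfl]

theorem finsum_mul_eq_qInt_mul {V : Type*} [DecidableEq V] {h : V → ℕ}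
    (hfib : ∀ n : ℕ, {v : V | h v = n}.Finite) {m m' : V → V → ℤ[X]}
    (hm : IsGraded h m) (hm' : IsGraded h m') {r : ℤ[X]}
    (hdual : ∀ u v : V, h u = h v →
      (∑ᶠ w : V, m v w * m' u w) - X * (∑ᶠ w : V, m' w v * m w u) = if u = v then r else 0)
    {f : V → ℤ[X]} (hf : ∀ u : V, 1 ≤ h u → f u = ∑ᶠ v : V, m v u * f v) (n : ℕ) (v : V)
    (hv : h v = n) : ∑ᶠ u, m' v u * f u = r * qInt (n + 1) * f v := by
  have hcomm := finsum_mul_eq_of_commutation hfib hm hm' hdual hf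
  induction n generalizing v with
  | zero => simp [hcomm v, hm.eq_zero_of_height_eq_zero hv, qInt]
  | succ k ih =>
    have hdown : ∑ᶠ t, m t v * ∑ᶠ w, m' t w * f w = r * qInt (k + 1) * f v := by
      calc ∑ᶠ t, m t v * ∑ᶠ w, m' t w * f w = ∑ᶠ t, r * qInt (k + 1) * (m t v * f t) := by
            refine finsum_congr fun t => ?_
            by_cases ht : m t v = 0
            · simp [ht]
            · rw [ih t (by have := hm t v ht; omega)]
              ring
        _ = _ := by rw [← mul_finsum, ← hf v (by omega)]
    rw [hcomm v, hdown, qInt_succ (k + 1)]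
    ring

theorem stmt_5_general {V : Type*} [DecidableEq V] (h : V → ℕ) (v₀ : V)
    (m m' : V → V → Polynomial ℤ) (r : Polynomial ℤ)
    -- each fiber of the height function is finite
    (hfib : ∀ n : ℕ, {v : V | h v = n}.Finite)
    -- `v₀` is the unique vertex of height `0`
    (hv₀ : h v₀ = 0) (huniq : ∀ v : V, h v = 0 → v = v₀)
    -- edges go up exactly one level
    (hm : ∀ v u : V, m v u ≠ 0 → h u = h v + 1)
    (hm' : ∀ v u : V, m' v u ≠ 0 → h u = h v + 1)
    -- quantized duality with differential coefficient `r`: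
    -- `D_{Γ'}∘U_Γ − q·U_Γ∘D_{Γ'} = r·Id`, written entrywise
    (hdual : ∀ u v : V, h u = h v →
      (∑ᶠ w : V, m v w * m' u w) - Polynomial.X * (∑ᶠ w : V, m' w v * m w u) =
        (if u = v then r else 0))
    -- `f` and `f'` count paths (with weights) from `v₀` in `Γ` and `Γ'` respectively
    (f f' : V → Polynomial ℤ)
    (hf₀ : f v₀ = 1) (hf : ∀ u : V, 1 ≤ h u → f u = ∑ᶠ v : V, m v u * f v)
    (hf'₀ : f' v₀ = 1) (hf' : ∀ u : V, 1 ≤ h u → f' u = ∑ᶠ v : V, m' v u * f' v)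
    (n : ℕ) :
    ∑ v ∈ (hfib n).toFinset, f v * f' v = r ^ n * qFactorial n := by
  induction n with
  | zero =>
    have hlevel : (hfib 0).toFinset = {v₀} := by
      ext v
      rw [mem_level_toFinset, Finset.mem_singleton]
      exact ⟨huniq v, fun hv => hv ▸ hv₀⟩
    simp [hlevel, hf₀, hf'₀, qFactorial]
  | succ n ih =>
    calc ∑ u ∈ (hfib (n + 1)).toFinset, f u * f' u
        = ∑ u ∈ (hfib (n + 1)).toFinset, f u * ∑ᶠ v, m' v u * f' v :=
          Finset.sum_congr rfl fun u hu => by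
            rw [← hf' u (by rw [(mem_level_toFinset hfib).1 hu]; omega)]
      _ = ∑ v ∈ (hfib n).toFinset, f' v * (r * qInt (n + 1) * f v) := by
          rw [sum_level_succ_mul_finsum hfib hm']
          exact Finset.sum_congr rfl fun v hv =>
            by rw [finsum_mul_eq_qInt_mul hfib hm hm' hdual hf n v ((mem_level_toFinset hfib).1 hv)]
      _ = r ^ (n + 1) * qFactorial (n + 1) := by
          simp only [mul_left_comm (f' _), ← Finset.mul_sum, mul_comm (f' _), ih, qFactorial,
            Finset.prod_range_succ]
          ring

/-- Lam's path-counting theorem for quantized dual graded graphs: if `(Γ, Γ')` is a pair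
of quantized dual graded graphs (multiplicities in `ℕ[q] ⊆ ℤ[q]`) with differential
coefficient `r ∈ ℤ[q]`, i.e. `D_{Γ'}∘U_Γ − q·U_Γ∘D_{Γ'} = r·Id`, then the sum over the
vertices `v` of height `n` of `f^v_Γ · f^v_{Γ'}` equals `rⁿ · [n]!`. -/
theorem stmt_5 {V : Type*} [DecidableEq V] (h : V → ℕ) (v₀ : V)
    (m m' : V → V → Polynomial ℤ) (r : Polynomial ℤ)
    -- the multiplicities lie in `ℕ[q]`: all coefficients are nonnegative
    (hmnat : ∀ v u : V, ∀ i : ℕ, 0 ≤ (m v u).coeff i)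
    (hm'nat : ∀ v u : V, ∀ i : ℕ, 0 ≤ (m' v u).coeff i)
    -- each fiber of the height function is finite
    (hfib : ∀ n : ℕ, {v : V | h v = n}.Finite)
    -- `v₀` is the unique vertex of height `0`
    (hv₀ : h v₀ = 0) (huniq : ∀ v : V, h v = 0 → v = v₀)
    -- edges go up exactly one level
    (hm : ∀ v u : V, m v u ≠ 0 → h u = h v + 1)
    (hm' : ∀ v u : V, m' v u ≠ 0 → h u = h v + 1)
    -- quantized duality with differential coefficient `r`:
    -- `D_{Γ'}∘U_Γ − q·U_Γ∘D_{Γ'} = r·Id`, written entrywise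
    (hdual : ∀ u v : V, h u = h v →
      (∑ᶠ w : V, m v w * m' u w) - Polynomial.X * (∑ᶠ w : V, m' w v * m w u) =
        (if u = v then r else 0))
    -- `f` and `f'` count paths (with weights) from `v₀` in `Γ` and `Γ'` respectively
    (f f' : V → Polynomial ℤ)
    (hf₀ : f v₀ = 1) (hf : ∀ u : V, 1 ≤ h u → f u = ∑ᶠ v : V, m v u * f v)
    (hf'₀ : f' v₀ = 1) (hf' : ∀ u : V, 1 ≤ h u → f' u = ∑ᶠ v : V, m' v u * f' v)
    (n : ℕ) :
    ∑ v ∈ (hfib n).toFinset, f v * f' v = r ^ n * qFactorial n :=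
  stmt_5_general h v₀ m m' r hfib hv₀ huniq hm hm' hdual f f' hf₀ hf hf'₀ hf' n
end

section
/- Let R be a commutative ring, let B be a bialgebra over R, let β ∈ B satisfy Δ(β) = 1⊗β + β⊗1 and ε(β) = 0, and let φ : B → R be an R-linear map such that φ(x·y) = φ(x)·ε(y) + ε(x)·φ(y) for all x, y ∈ B. Define R-linear operators on B by U(x) = x·β (right multiplication by β) and D = (φ ⊗ id)∘Δ. Then D∘U − U∘D = φ(β)·Id_B. -/
open TensorProduct

/-! Right multiplication by a primitive `β` passes through `Δ` as
`Δ(xβ) = Δ(x)(1 ⊗ β) + Δ(x)(β ⊗ 1)`. Applying `φ ⊗ id`, the first summand gives `D(x)·β`;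
in the second the `ε`-derivation rule and `ε(β) = 0` leave `φ(β) (ε ⊗ id)Δ(x) = φ(β) x`. -/

theorem lid_map_mul_one_tmul {R B : Type*} [CommSemiring R] [Semiring B] [Algebra R B]
    (f : B →ₗ[R] R) (t : B ⊗[R] B) (b : B) :
    TensorProduct.lid R B (map f LinearMap.id (t * (1 ⊗ₜ[R] b))) =
      TensorProduct.lid R B (map f LinearMap.id t) * b := by
  induction t using TensorProduct.induction_on with
  | zero => simp
  | tmul a c => simp [Algebra.TensorProduct.tmul_mul_tmul]
  | add s t hs ht => simp only [add_mul, map_add, hs, ht]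

theorem lid_map_mul_tmul_one_of_derivation {R B : Type*} [CommSemiring R] [Semiring B]
    [Bialgebra R B] (φ : B →ₗ[R] R)
    (hφ : ∀ x y : B, φ (x * y) = φ x * Coalgebra.counit y + Coalgebra.counit x * φ y)
    (t : B ⊗[R] B) (b : B) :
    TensorProduct.lid R B (map φ LinearMap.id (t * (b ⊗ₜ[R] 1))) =
      Coalgebra.counit (R := R) b • TensorProduct.lid R B (map φ LinearMap.id t) +
        φ b • TensorProduct.lid R B (map (Coalgebra.counit (R := R)) LinearMap.id t) := by
  induction t using TensorProduct.induction_on with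
  | zero => simp
  | tmul a c => simp [Algebra.TensorProduct.tmul_mul_tmul, hφ, add_smul, smul_smul, mul_comm]
  | add s t hs ht => simp only [add_mul, map_add, hs, ht, smul_add]; abel

theorem lid_map_counit_comul {R A : Type*} [CommSemiring R] [AddCommMonoid A] [Module R A]
    [Coalgebra R A] (x : A) :
    TensorProduct.lid R A (map (Coalgebra.counit (R := R)) LinearMap.id (Coalgebra.comul x)) =
      x := by
  rw [← LinearMap.rTensor_def, Coalgebra.rTensor_counit_comul, TensorProduct.lid_tmul, one_smul]

/-- Right-multiplication variant: if `β` is a primitive element of a bialgebra `B` and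
`φ : B → R` is an `ε`-derivation, then the operators `U(x) = x·β` and `D = (φ ⊗ id) ∘ Δ`
satisfy `D∘U − U∘D = φ(β)·Id`. -/
theorem stmt_14 {R : Type*} [CommRing R] {B : Type*} [Ring B] [Bialgebra R B]
    (β : B)
    (hβ : Coalgebra.comul β = 1 ⊗ₜ[R] β + β ⊗ₜ[R] 1)
    (hεβ : Coalgebra.counit β = (0 : R))
    (φ : B →ₗ[R] R)
    (hφ : ∀ x y : B, φ (x * y) = φ x * Coalgebra.counit y + Coalgebra.counit x * φ y)
    (U D : B →ₗ[R] B)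
    (hU : ∀ x : B, U x = x * β)
    (hD : D = (TensorProduct.lid R B).toLinearMap ∘ₗ
      (TensorProduct.map φ LinearMap.id) ∘ₗ Coalgebra.comul) :
    D ∘ₗ U - U ∘ₗ D = φ β • (LinearMap.id : B →ₗ[R] B) := by
  subst hD
  ext x
  have hcomul : Coalgebra.comul (R := R) (x * β) =
      Coalgebra.comul x * (1 ⊗ₜ[R] β) + Coalgebra.comul x * (β ⊗ₜ[R] 1) := by
    rw [Bialgebra.comul_mul, hβ, mul_add]
  simp only [LinearMap.sub_apply, LinearMap.comp_apply, LinearMap.smul_apply,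
    LinearMap.id_apply, LinearEquiv.coe_coe, hU]
  rw [hcomul, map_add, map_add, lid_map_mul_one_tmul,
    lid_map_mul_tmul_one_of_derivation φ hφ, lid_map_counit_comul, hεβ, zero_smul, zero_add,
    add_sub_cancel_left]
end
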